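/- The pressure function has the asymptote lim_{t→∞} (p(t) − t log(3/2)) = 0; in particular p(t) ≥ t log(3/2) for all t ≥ 0. -/

import Mathlib

/-!
The lower bound comes from the orbit of `1/3`, on which every factor `1 - cos (2π 2^ℓ x)` equals
`3/2`.

For the upper bound put `c_ℓ = cos (2π 2^ℓ x)`, so that `c_{ℓ+1} = 2 c_ℓ² - 1` and
`(1 - c_ℓ)² (1 - c_{ℓ+1}) = 2 (1 - c_ℓ)³ (1 + c_ℓ)`, which is at most `27/8` (attained at
`c_ℓ = -1/2`), and at most `2` when `c_ℓ ≥ 0`. The cube of `∏_{ℓ ≤ n} (1 - c_ℓ)` telescopes into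
`n` such pairs and a factor at most `8`. On the `k`-th dyadic interval of level `n + 1`,
`c_{n-1-i} ≥ 0` whenever bits `i` and `i + 1` of `k` agree, and summing over `k` gives
`A t (n + 1) ≤ 2 · 8^{t/3} (2^{t/3} + (27/8)^{t/3})^n` for `t ≥ 0`. Hence
`t log (3/2) ≤ p t ≤ t log (3/2) + log (1 + (16/27)^{t/3})`.
-/

noncomputable def psi (x : ℝ) : ℝ := Real.log (1 - Real.cos (2 * Real.pi * x))

noncomputable def psiSum (n : ℕ) (x : ℝ) : ℝ :=
  ∑ ℓ ∈ Finset.range n, psi (Int.fract ((2:ℝ) ^ ℓ * x))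

/-- `A t n = ∑_{ω ∈ Σ^n} sup_{x ∈ ⟨ω⟩} exp(t ψ_n(x))`. -/
noncomputable def A (t : ℝ) (n : ℕ) : ENNReal :=
  ∑ k ∈ Finset.range (2^n),
    ⨆ y ∈ Set.Icc ((k:ℝ) / 2^n) ((k+1 : ℝ) / 2^n), ENNReal.ofReal (Real.exp (t * psiSum n y))

open Real Filter Finset Topology

noncomputable def cosOrbit (x : ℝ) (ℓ : ℕ) : ℝ := cos (2 * π * (2 ^ ℓ * x))

noncomputable def pairWeight (c : ℝ) : ℝ := if 0 ≤ c then 2 else 27 / 8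

section cosOrbit

variable (x : ℝ)

lemma cos_two_pi_mul_fract (z : ℝ) : cos (2 * π * Int.fract z) = cos (2 * π * z) := by
  rw [Int.fract, show 2 * π * (z - ⌊z⌋) = 2 * π * z - ⌊z⌋ * (2 * π) by ring,
    cos_sub_int_mul_two_pi]

lemma psiSum_eq_sum_log (n : ℕ) :
    psiSum n x = ∑ ℓ ∈ range n, log (1 - cosOrbit x ℓ) := by
  simp only [psiSum, psi, cosOrbit, cos_two_pi_mul_fract]

lemma cosOrbit_succ (ℓ : ℕ) : cosOrbit x (ℓ + 1) = 2 * cosOrbit x ℓ ^ 2 - 1 := by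
  rw [cosOrbit, cosOrbit, ← cos_two_mul]
  ring_nf

lemma cosOrbit_le_one (ℓ : ℕ) : cosOrbit x ℓ ≤ 1 := cos_le_one _

lemma neg_one_le_cosOrbit (ℓ : ℕ) : -1 ≤ cosOrbit x ℓ := neg_one_le_cos _

lemma cosOrbit_eq_one_of_le {m ℓ : ℕ} (h : cosOrbit x m = 1) (hmℓ : m ≤ ℓ) :
    cosOrbit x ℓ = 1 := by
  induction ℓ, hmℓ using Nat.le_induction with
  | base => exact h
  | succ ℓ _ ih => rw [cosOrbit_succ, ih]; norm_num

lemma cosOrbit_one_third (ℓ : ℕ) : cosOrbit (1 / 3) ℓ = -1 / 2 := by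
  induction ℓ with
  | zero =>
    rw [cosOrbit, show 2 * π * (2 ^ 0 * (1 / 3)) = π - π / 3 by ring, cos_pi_sub,
      cos_pi_div_three]
    norm_num
  | succ ℓ ih => rw [cosOrbit_succ, ih]; norm_num

lemma psiSum_one_third (n : ℕ) : psiSum n (1 / 3) = n * log (3 / 2) := by
  simp only [psiSum_eq_sum_log, cosOrbit_one_third, sum_const, card_range, nsmul_eq_mul]
  norm_num

end cosOrbit

lemma one_le_pairWeight (c : ℝ) : 1 ≤ pairWeight c := by
  unfold pairWeight; split_ifs <;> norm_num

lemma pairWeight_le (c : ℝ) : pairWeight c ≤ 27 / 8 := by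
  unfold pairWeight; split_ifs <;> norm_num

lemma pairWeight_of_nonneg {c : ℝ} (hc : 0 ≤ c) : pairWeight c = 2 := if_pos hc

lemma sq_one_sub_cosOrbit_mul_le (x : ℝ) (ℓ : ℕ) :
    (1 - cosOrbit x ℓ) ^ 2 * (1 - cosOrbit x (ℓ + 1)) ≤ pairWeight (cosOrbit x ℓ) := by
  have h1 := cosOrbit_le_one x ℓ
  rw [cosOrbit_succ, pairWeight]
  set c := cosOrbit x ℓ
  split_ifs with hc
  · nlinarith [mul_nonneg hc (sub_nonneg.2 h1), sq_nonneg (1 - c)]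
  · nlinarith [sq_nonneg (2 * c + 1), sq_nonneg (2 * c - 3),
      sq_nonneg ((2 * c + 1) * (2 * c - 3))]

lemma pow_three_prod_range_succ {M : Type*} [CommMonoid M] (f : ℕ → M) (k : ℕ) :
    (∏ ℓ ∈ range (k + 1), f ℓ) ^ 3
      = f 0 * f k ^ 2 * ∏ ℓ ∈ range k, (f ℓ ^ 2 * f (ℓ + 1)) := by
  rw [prod_mul_distrib, prod_pow, pow_succ]
  nth_rw 1 [prod_range_succ]
  rw [prod_range_succ', mul_pow]
  ac_rfl

lemma prod_one_sub_cosOrbit_pow_three_le (x : ℝ) (m : ℕ) :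
    (∏ ℓ ∈ range m, (1 - cosOrbit x ℓ)) ^ 3
      ≤ 8 * ∏ ℓ ∈ range (m - 1), pairWeight (cosOrbit x ℓ) := by
  have hu := fun ℓ => sub_nonneg.2 (cosOrbit_le_one x ℓ)
  have hc := neg_one_le_cosOrbit x
  rcases m with _ | k
  · simp
  rw [pow_three_prod_range_succ, Nat.add_sub_cancel]
  have hends : (1 - cosOrbit x 0) * (1 - cosOrbit x k) ^ 2 ≤ 8 := by
    nlinarith [hu 0, hu k, hc 0, hc k, mul_nonneg (hu 0) (hu k)]
  have hpairs := prod_le_prod (fun ℓ _ => mul_nonneg (sq_nonneg _) (hu (ℓ + 1)))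
    (fun ℓ _ => sq_one_sub_cosOrbit_mul_le x ℓ) (s := range k)
  exact mul_le_mul hends hpairs (prod_nonneg fun ℓ _ => mul_nonneg (sq_nonneg _) (hu _))
    (by norm_num)

lemma exp_sum_log_eq_prod {ι : Type*} {s : Finset ι} {u : ι → ℝ}
    (hu : ∀ i ∈ s, 0 < u i) :
    exp (∑ i ∈ s, log (u i)) = ∏ i ∈ s, u i := by
  rw [exp_sum]
  exact prod_congr rfl fun i hi => exp_log (hu i hi)

/-- Since `log 0 = 0`, a vanishing factor contributes `1` to `exp (psiSum n x)`; but once a factor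
vanishes, all later ones do, so the product is truncated at the first zero. -/
lemma exists_exp_psiSum_eq_prod (n : ℕ) (x : ℝ) :
    ∃ m ≤ n, exp (psiSum n x) = ∏ ℓ ∈ range m, (1 - cosOrbit x ℓ) := by
  classical
  have hpos : ∀ ℓ, cosOrbit x ℓ ≠ 1 → 0 < 1 - cosOrbit x ℓ := fun ℓ h =>
    sub_pos.2 (lt_of_le_of_ne (cosOrbit_le_one x ℓ) h)
  rw [psiSum_eq_sum_log]
  by_cases h : ∃ ℓ < n, cosOrbit x ℓ = 1
  · obtain ⟨hmn, hm⟩ := Nat.find_spec h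
    refine ⟨Nat.find h, hmn.le, ?_⟩
    rw [← sum_range_add_sum_Ico _ hmn.le, sum_eq_zero (s := Ico _ n), add_zero]
    · exact exp_sum_log_eq_prod fun ℓ hℓ =>
        hpos ℓ fun h1 => Nat.find_min h (mem_range.1 hℓ) ⟨(mem_range.1 hℓ).trans hmn, h1⟩
    · intro ℓ hℓ
      rw [cosOrbit_eq_one_of_le x hm (mem_Ico.1 hℓ).1, sub_self, log_zero]
  · push Not at h
    exact ⟨n, le_rfl, exp_sum_log_eq_prod fun ℓ hℓ => hpos ℓ (h ℓ (mem_range.1 hℓ))⟩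

lemma exp_psiSum_pow_three_le (n : ℕ) (x : ℝ) :
    exp (psiSum n x) ^ 3 ≤ 8 * ∏ ℓ ∈ range (n - 1), pairWeight (cosOrbit x ℓ) := by
  obtain ⟨m, hmn, hm⟩ := exists_exp_psiSum_eq_prod n x
  rw [hm]
  refine (prod_one_sub_cosOrbit_pow_three_le x m).trans
    (mul_le_mul_of_nonneg_left ?_ (by norm_num))
  exact prod_le_prod_of_subset_of_one_le (range_subset_range.2 (by omega))
    (fun ℓ _ => zero_le_one.trans (one_le_pairWeight _)) (fun ℓ _ _ => one_le_pairWeight _)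

lemma cos_pi_div_two_mul_nonneg {z : ℝ} {j : ℕ} (hj : j % 4 = 0 ∨ j % 4 = 3)
    (h₁ : (j : ℝ) ≤ z) (h₂ : z ≤ j + 1) : 0 ≤ cos (π / 2 * z) := by
  -- `4 a ∈ {j, j + 1}`, so `π / 2 * z - 2 π a ∈ [-π / 2, π / 2]`
  set a : ℕ := (j + 1) / 4
  have ha₁ : (4 * a : ℝ) ≤ j + 1 := by exact_mod_cast (by omega : 4 * a ≤ j + 1)
  have ha₂ : (j : ℝ) ≤ 4 * a := by exact_mod_cast (by omega : j ≤ 4 * a)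
  rw [show π / 2 * z = (π / 2 * z - (a : ℤ) * (2 * π)) + (a : ℤ) * (2 * π) by ring,
    cos_add_int_mul_two_pi]
  push_cast
  apply cos_nonneg_of_mem_Icc
  constructor <;> nlinarith [pi_pos]

lemma div_two_pow_mod_four_of_testBit_eq {k i : ℕ} (h : k.testBit i = k.testBit (i + 1)) :
    k / 2 ^ i % 4 = 0 ∨ k / 2 ^ i % 4 = 3 := by
  rw [Nat.testBit_eq_decide_div_mod_eq, Nat.testBit_eq_decide_div_mod_eq, pow_succ,
    ← Nat.div_div_eq_div_mul, decide_eq_decide] at h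
  omega

/-- On the `k`-th dyadic interval of level `ℓ + i + 2`, the point `4 · 2^ℓ x` lies in
`[j, j + 1]` with `j = ⌊k / 2^i⌋`, and `j mod 4` is given by bits `i` and `i + 1` of `k`. -/
lemma cosOrbit_nonneg_of_testBit_eq {x : ℝ} {k i ℓ : ℕ}
    (hx : x ∈ Set.Icc ((k : ℝ) / 2 ^ (ℓ + i + 2)) ((k + 1 : ℝ) / 2 ^ (ℓ + i + 2)))
    (h : k.testBit i = k.testBit (i + 1)) : 0 ≤ cosOrbit x ℓ := by
  set j := k / 2 ^ i
  have hk : 2 ^ i * j + k % 2 ^ i = k := Nat.div_add_mod k _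
  have hr : k % 2 ^ i < 2 ^ i := Nat.mod_lt _ (by positivity)
  have hjk : ((2 ^ i * j : ℕ) : ℝ) ≤ k := by exact_mod_cast (by omega : 2 ^ i * j ≤ k)
  have hkj : (k + 1 : ℝ) ≤ ((2 ^ i * (j + 1) : ℕ) : ℝ) := by
    exact_mod_cast (by rw [mul_add]; omega : k + 1 ≤ 2 ^ i * (j + 1))
  push_cast at hjk hkj
  have hpow : (2 : ℝ) ^ (ℓ + i + 2) = 2 ^ i * (4 * 2 ^ ℓ) := by ring
  have h2i : (0 : ℝ) < 2 ^ i := by positivity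
  rw [Set.mem_Icc, hpow, div_le_iff₀ (by positivity), le_div_iff₀ (by positivity)] at hx
  rw [cosOrbit, show 2 * π * (2 ^ ℓ * x) = π / 2 * (4 * 2 ^ ℓ * x) by ring]
  refine cos_pi_div_two_mul_nonneg (div_two_pow_mod_four_of_testBit_eq h) ?_ ?_
  · nlinarith
  · nlinarith

lemma sum_prod_testBit_eq {R : Type*} [CommSemiring R] (a b : R) (n : ℕ) :
    ∑ k ∈ range (2 ^ (n + 1)),
        ∏ i ∈ range n, (if k.testBit i = k.testBit (i + 1) then a else b)
      = 2 * (a + b) ^ n := by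
  induction n with
  | zero => simp
  | succ n ih =>
    set w : ℕ → ℕ → R := fun k i => if k.testBit i = k.testBit (i + 1) then a else b
    have hlow : ∀ k, ∀ i < n, w (2 ^ (n + 1) + k) i = w k i := fun k i hi => by
      simp only [w, Nat.testBit_two_pow_add_gt (by omega : i < n + 1),
        Nat.testBit_two_pow_add_gt (by omega : i + 1 < n + 1)]
    have htop : ∀ k < 2 ^ (n + 1), w k n + w (2 ^ (n + 1) + k) n = a + b := fun k hk => by
      simp only [w, Nat.testBit_two_pow_add_gt (by omega : n < n + 1),
        Nat.testBit_two_pow_add_eq, Nat.testBit_lt_two_pow hk]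
      cases k.testBit n <;> simp [add_comm]
    rw [pow_succ, mul_two, sum_range_add, ← sum_add_distrib]
    calc ∑ k ∈ range (2 ^ (n + 1)),
          (∏ i ∈ range (n + 1), w k i + ∏ i ∈ range (n + 1), w (2 ^ (n + 1) + k) i)
        = ∑ k ∈ range (2 ^ (n + 1)), (∏ i ∈ range n, w k i) * (a + b) := by
          refine sum_congr rfl fun k hk => ?_
          rw [prod_range_succ, prod_range_succ,
            prod_congr rfl fun i hi => hlow k i (mem_range.1 hi), ← mul_add,
            htop k (mem_range.1 hk)]
      _ = 2 * (a + b) ^ (n + 1) := by rw [← sum_mul, ih, pow_succ, mul_assoc]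

section UpperBound

variable {t x : ℝ} {k n : ℕ}

lemma exp_psiSum_pow_three_le_of_mem
    (hx : x ∈ Set.Icc ((k : ℝ) / 2 ^ (n + 1)) ((k + 1 : ℝ) / 2 ^ (n + 1))) :
    exp (psiSum (n + 1) x) ^ 3
      ≤ 8 * ∏ i ∈ range n, (if k.testBit i = k.testBit (i + 1) then 2 else 27 / 8) := by
  refine (exp_psiSum_pow_three_le (n + 1) x).trans
    (mul_le_mul_of_nonneg_left ?_ (by norm_num))
  rw [Nat.add_sub_cancel, ← prod_range_reflect]
  refine prod_le_prod (fun i _ => zero_le_one.trans (one_le_pairWeight _)) fun i hi => ?_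
  split_ifs with h
  · have hlevel : n - 1 - i + i + 2 = n + 1 := by have := mem_range.1 hi; omega
    rw [← hlevel] at hx
    exact (pairWeight_of_nonneg (cosOrbit_nonneg_of_testBit_eq hx h)).le
  · exact pairWeight_le _

lemma exp_mul_psiSum_le_of_mem (ht : 0 ≤ t)
    (hx : x ∈ Set.Icc ((k : ℝ) / 2 ^ (n + 1)) ((k + 1 : ℝ) / 2 ^ (n + 1))) :
    exp (t * psiSum (n + 1) x) ≤ 8 ^ (t / 3) * ∏ i ∈ range n,
      (if k.testBit i = k.testBit (i + 1) then 2 ^ (t / 3) else (27 / 8) ^ (t / 3)) := by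
  have hw : ∀ i ∈ range n,
      (0 : ℝ) ≤ if k.testBit i = k.testBit (i + 1) then 2 else 27 / 8 :=
    fun i _ => by split_ifs <;> norm_num
  calc exp (t * psiSum (n + 1) x) = (exp (psiSum (n + 1) x) ^ 3) ^ (t / 3) := by
        rw [← rpow_natCast, ← rpow_mul (exp_pos _).le, ← exp_mul]; ring_nf
    _ ≤ (8 * ∏ i ∈ range n,
          (if k.testBit i = k.testBit (i + 1) then 2 else 27 / 8)) ^ (t / 3) :=
        rpow_le_rpow (by positivity) (exp_psiSum_pow_three_le_of_mem hx) (by positivity)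
    _ = _ := by
        rw [mul_rpow (by norm_num) (prod_nonneg hw), ← finsetProd_rpow _ _ hw]
        congr 1
        exact prod_congr rfl fun i _ => by split_ifs <;> rfl

lemma A_succ_le (ht : 0 ≤ t) (n : ℕ) :
    A t (n + 1) ≤ ENNReal.ofReal (2 * 8 ^ (t / 3) * (2 ^ (t / 3) + (27 / 8) ^ (t / 3)) ^ n) := by
  calc A t (n + 1)
      ≤ ∑ k ∈ range (2 ^ (n + 1)), ENNReal.ofReal (8 ^ (t / 3) * ∏ i ∈ range n,
        (if k.testBit i = k.testBit (i + 1) then 2 ^ (t / 3) else (27 / 8) ^ (t / 3))) :=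
        sum_le_sum fun k _ => iSup₂_le fun y hy =>
          ENNReal.ofReal_le_ofReal (exp_mul_psiSum_le_of_mem ht hy)
    _ = _ := by
        rw [← ENNReal.ofReal_sum_of_nonneg fun k _ => by positivity, ← mul_sum,
          sum_prod_testBit_eq]
        ring_nf

end UpperBound

lemma exists_mem_dyadic {y : ℝ} (hy : y ∈ Set.Ico 0 1) (n : ℕ) :
    ∃ k : ℕ, k < 2 ^ n ∧ y ∈ Set.Icc ((k : ℝ) / 2 ^ n) ((k + 1 : ℝ) / 2 ^ n) := by
  have h2n : (0 : ℝ) < 2 ^ n := by positivity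
  have hy₀ : 0 ≤ 2 ^ n * y := mul_nonneg h2n.le hy.1
  refine ⟨⌊2 ^ n * y⌋₊, (Nat.floor_lt hy₀).2 ?_, ?_, ?_⟩
  · push_cast; nlinarith [hy.2]
  · rw [div_le_iff₀ h2n]; exact (Nat.floor_le hy₀).trans_eq (mul_comm _ _)
  · rw [le_div_iff₀ h2n]; exact (mul_comm _ _).trans_le (Nat.lt_floor_add_one _).le

lemma ofReal_exp_le_A (t : ℝ) {y : ℝ} (hy : y ∈ Set.Ico 0 1) (n : ℕ) :
    ENNReal.ofReal (exp (t * psiSum n y)) ≤ A t n := by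
  obtain ⟨k, hk, hyk⟩ := exists_mem_dyadic hy n
  calc ENNReal.ofReal (exp (t * psiSum n y))
      ≤ ⨆ y ∈ Set.Icc ((k : ℝ) / 2 ^ n) ((k + 1 : ℝ) / 2 ^ n),
          ENNReal.ofReal (exp (t * psiSum n y)) :=
        le_iSup₂ (f := fun y _ => ENNReal.ofReal (exp (t * psiSum n y))) y hyk
    _ ≤ A t n := by
        unfold A
        exact single_le_sum (fun _ _ => zero_le (α := ENNReal)) (mem_range.2 hk)

lemma ofReal_exp_pow_le_A (t : ℝ) (n : ℕ) :
    ENNReal.ofReal (exp (t * log (3 / 2)) ^ n) ≤ A t n := by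
  convert ofReal_exp_le_A t (y := 1 / 3) ⟨by norm_num, by norm_num⟩ n using 2
  rw [psiSum_one_third, ← exp_nat_mul]
  ring_nf

section Limits

variable {a : ℕ → ENNReal} {L : EReal}

lemma log_ofReal_div_natCast {r : ℝ} (hr : 0 < r) (n : ℕ) :
    ENNReal.log (ENNReal.ofReal r) / (n : EReal) = ((log r / n : ℝ) : EReal) := by
  rw [ENNReal.log_ofReal_of_pos hr, EReal.coe_div, EReal.coe_coe_eq_natCast]

lemma log_le_of_tendsto_log_div {B : ℝ} (hB : 0 < B) (ha : ∀ n, ENNReal.ofReal (B ^ n) ≤ a n)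
    (h : Tendsto (fun n : ℕ => ENNReal.log (a n) / n) atTop (𝓝 L)) :
    (log B : EReal) ≤ L := by
  refine ge_of_tendsto h ?_
  filter_upwards [eventually_ne_atTop 0] with n hn
  calc (log B : EReal) = ENNReal.log (ENNReal.ofReal (B ^ n)) / n := by
        rw [log_ofReal_div_natCast (pow_pos hB n), log_pow,
          mul_div_cancel_left₀ _ (Nat.cast_ne_zero.2 hn)]
    _ ≤ _ := EReal.div_le_div_right_of_nonneg (Nat.cast_nonneg' _) (ENNReal.log_monotone (ha n))

lemma le_log_of_tendsto_log_div {C B : ℝ} (hC : 0 < C) (hB : 0 < B)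
    (ha : ∀ n, a (n + 1) ≤ ENNReal.ofReal (C * B ^ n))
    (h : Tendsto (fun n : ℕ => ENNReal.log (a n) / n) atTop (𝓝 L)) : L ≤ log B := by
  have hreal : Tendsto (fun n : ℕ => log (C * B ^ n) / (n + 1 : ℕ)) atTop (𝓝 (log B)) := by
    have h₁ := (tendsto_const_div_atTop_nhds_zero_nat (log C)).comp (tendsto_add_atTop_nat 1)
    have h₂ := (tendsto_natCast_div_add_atTop (1 : ℝ)).const_mul (log B)
    rw [mul_one] at h₂
    have h₃ := h₁.add h₂
    rw [zero_add] at h₃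
    refine h₃.congr fun n => ?_
    rw [Function.comp_apply, log_mul hC.ne' (pow_pos hB _).ne', log_pow]
    push_cast
    ring
  refine le_of_tendsto_of_tendsto' (h.comp (tendsto_add_atTop_nat 1)) (EReal.tendsto_coe.2 hreal)
    fun n => ?_
  rw [Function.comp_apply, ← log_ofReal_div_natCast (by positivity)]
  exact EReal.div_le_div_right_of_nonneg (Nat.cast_nonneg' _) (ENNReal.log_monotone (ha n))

lemma tendsto_log_rpow_add_rpow_sub_mul_log {a b : ℝ} (ha : 0 < a) (hab : a < b) :
    Tendsto (fun s : ℝ => log (a ^ s + b ^ s) - s * log b) atTop (𝓝 0) := by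
  have hb : 0 < b := ha.trans hab
  have hq : Tendsto (fun s : ℝ => (a / b) ^ s) atTop (𝓝 0) :=
    tendsto_rpow_atTop_of_base_lt_one _ (by linarith [div_pos ha hb]) ((div_lt_one hb).2 hab)
  have hlog : Tendsto (fun s : ℝ => log ((a / b) ^ s + 1)) atTop (𝓝 0) := by
    simpa [Function.comp_def] using
      (continuousAt_log (by norm_num : (0 : ℝ) + 1 ≠ 0)).tendsto.comp (hq.add_const 1)
  refine hlog.congr fun s => ?_
  rw [div_rpow ha.le hb.le, ← log_rpow hb, ← log_div (by positivity) (by positivity), add_div,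
    div_self (by positivity)]

lemma tendsto_log_two_rpow_add_rpow_sub_mul_log :
    Tendsto (fun t : ℝ => log (2 ^ (t / 3) + (27 / 8) ^ (t / 3)) - t * log (3 / 2))
      atTop (𝓝 0) := by
  have hlog : log (27 / 8 : ℝ) = 3 * log (3 / 2) := by
    rw [show (27 / 8 : ℝ) = (3 / 2) ^ 3 by norm_num, log_pow]; norm_num
  refine ((tendsto_log_rpow_add_rpow_sub_mul_log (a := 2) (b := 27 / 8) (by norm_num)
    (by norm_num)).comp (tendsto_id.atTop_div_const (by norm_num : (0 : ℝ) < 3))).congr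
    fun t => ?_
  rw [Function.comp_apply, id, hlog]
  ring

lemma tendsto_sub_coe_of_coe_le_of_le_coe {α : Type*} {l : Filter α} {f : α → EReal}
    {c g : α → ℝ} (hc : ∀ t, (c t : EReal) ≤ f t) (hg : ∀ᶠ t in l, f t ≤ g t)
    (hgc : Tendsto (fun t => g t - c t) l (𝓝 0)) :
    Tendsto (fun t => f t - c t) l (𝓝 0) := by
  refine tendsto_of_tendsto_of_tendsto_of_le_of_le' tendsto_const_nhds
    (EReal.tendsto_coe.2 hgc) (Eventually.of_forall fun t => ?_) (hg.mono fun t ht => ?_)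
  · have h := EReal.sub_le_sub (hc t) (le_refl (c t : EReal))
    rwa [← EReal.coe_sub, sub_self, EReal.coe_zero] at h
  · rw [EReal.coe_sub]
    exact EReal.sub_le_sub ht le_rfl

end Limits

theorem pressure_asymptote (p : ℝ → EReal)
    (hp : ∀ t : ℝ, Filter.Tendsto (fun n : ℕ => ENNReal.log (A t n) / (n : EReal))
      Filter.atTop (nhds (p t))) :
    (∀ t : ℝ, 0 ≤ t → ((t * Real.log (3/2) : ℝ) : EReal) ≤ p t) ∧
    Filter.Tendsto (fun t : ℝ => p t - ((t * Real.log (3/2) : ℝ) : EReal))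
      Filter.atTop (nhds (0 : EReal)) := by
  have hlower : ∀ t : ℝ, ((t * log (3 / 2) : ℝ) : EReal) ≤ p t := fun t => by
    simpa only [log_exp] using
      log_le_of_tendsto_log_div (exp_pos _) (ofReal_exp_pow_le_A t) (hp t)
  have hupper : ∀ᶠ t in atTop, p t ≤ (log (2 ^ (t / 3) + (27 / 8) ^ (t / 3)) : ℝ) := by
    filter_upwards [eventually_ge_atTop 0] with t ht
    exact le_log_of_tendsto_log_div (by positivity) (by positivity) (A_succ_le ht) (hp t)
  exact ⟨fun t _ => hlower t, tendsto_sub_coe_of_coe_le_of_le_coe hlower hupper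
    tendsto_log_two_rpow_add_rpow_sub_mul_log⟩
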